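/- arXiv:1402.5165 — 7 statements merged into one kernel-verified Lean document; each statement's English description precedes it below -/
import Mathlib

section
/- Let S be a pure-strategies solution of finite games. If S satisfies Strategic Equivalence (SE) and Pure Individual Rationality (PIR), then for every game u, every element of S(u) is a pure Nash equilibrium of u, i.e. S(u) ⊆ PNE(u). -/
open scoped Classical

noncomputable section

/-- A finite normal-form game on action sets `A i`: a payoff function for each player. -/
abbrev Game {n : ℕ} (A : Fin n → Type*) : Type _ :=
  Fin n → (∀ j, A j) → ℝ

/-- Opponents' action profiles of player `i`. -/
abbrev Opp {n : ℕ} (A : Fin n → Type*) (i : Fin n) : Type _ :=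
  ∀ j : {j : Fin n // j ≠ i}, A j.1

/-- The game `z(c, i, b₋ᵢ)`: player `i` receives payoff `c` at every profile whose
opponents' component equals `b`, and `0` otherwise; all other players always get `0`. -/
def zGame {n : ℕ} {A : Fin n → Type*} (c : ℝ) (i : Fin n) (b : Opp A i) : Game A :=
  fun j a => if j = i ∧ (∀ k : {k : Fin n // k ≠ i}, a k.1 = b k) then c else 0

/-- The full action profile obtained from own action `ai` of player `i` and an
opponents' profile `b`. -/
def merge {n : ℕ} {A : Fin n → Type*} (i : Fin n) (ai : A i) (b : Opp A i) : ∀ j, A j :=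
  fun j => if h : j = i then cast (congrArg A h.symm) ai else b ⟨j, h⟩

/-- The pure individually rational value of player `i`:
`pir_i(u) = max_{a_i} min_{a_{-i}} u_i(a_i, a_{-i})`. -/
def pir {n : ℕ} {A : Fin n → Type*} (u : Game A) (i : Fin n) : ℝ :=
  ⨆ ai : A i, ⨅ b : Opp A i, u i (merge i ai b)

/-- `a` is a pure Nash equilibrium of `u`. -/
def IsPNE {n : ℕ} {A : Fin n → Type*} (u : Game A) (a : ∀ j, A j) : Prop :=
  ∀ (i : Fin n) (bi : A i), u i (Function.update a i bi) ≤ u i a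

/-!
Strategic equivalence lets us add an arbitrary constant `c` to player `i`'s payoff at every
opponents' profile other than `x₋ᵢ` without changing `S`. For `c` large, the deviation `bᵢ`
then guarantees player `i` at least `uᵢ(bᵢ, x₋ᵢ)` against every opponents' profile, so this
is a lower bound for `pirᵢ`, while the payoff at `x` is still `uᵢ(x)`; PIR gives
`uᵢ(x) ≥ uᵢ(bᵢ, x₋ᵢ)`.
-/

section

variable {n : ℕ} {A : Fin n → Type*}

def projOpp (i : Fin n) (a : ∀ j, A j) : Opp A i :=
  fun k => a k.1

lemma merge_projOpp (i : Fin n) (bi : A i) (a : ∀ j, A j) :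
    merge i bi (projOpp i a) = Function.update a i bi := by
  funext j
  by_cases h : j = i
  · subst h
    simp [merge]
  · simp [merge, h, projOpp]

lemma projOpp_merge (i : Fin n) (bi : A i) (b : Opp A i) : projOpp i (merge i bi b) = b := by
  funext k
  simp [projOpp, merge, k.2]

lemma zGame_apply_self (c : ℝ) (i : Fin n) (b : Opp A i) (a : ∀ j, A j) :
    zGame c i b i a = if projOpp i a = b then c else 0 := by
  simp [zGame, projOpp, funext_iff]

lemma sum_zGame_apply_self (c : ℝ) (i : Fin n) (F : Finset (Opp A i)) (a : ∀ j, A j) :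
    (∑ b ∈ F, zGame c i b) i a = if projOpp i a ∈ F then c else 0 := by
  simp only [Finset.sum_apply, zGame_apply_self, Finset.sum_ite_eq]

lemma eq_add_sum_zGame_of_SE (S : Game A → Set (∀ j, A j))
    (SE : ∀ (u : Game A) (c : ℝ) (i : Fin n) (b : Opp A i), S u = S (u + zGame c i b))
    (u : Game A) (c : ℝ) (i : Fin n) (F : Finset (Opp A i)) :
    S u = S (u + ∑ b ∈ F, zGame c i b) := by
  induction F using Finset.induction_on with
  | empty => simp
  | insert b F hb ih =>
    rw [ih, SE _ c i b, Finset.sum_insert hb, add_comm (zGame c i b), add_assoc]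

lemma le_pir_of_forall_le {u : Game A} {i : Fin n} [Finite (A i)] [Nonempty (Opp A i)]
    (ai : A i) {t : ℝ} (h : ∀ b, t ≤ u i (merge i ai b)) : t ≤ pir u i :=
  (le_ciInf h).trans <|
    le_ciSup (f := fun a => ⨅ b, u i (merge i a b)) (Finite.bddAbove_range _) ai

end

theorem statement0_general {n : ℕ} (A : Fin n → Type*)
    [∀ i, Fintype (A i)]
    (S : Game A → Set (∀ j, A j))
    (SE : ∀ (u : Game A) (c : ℝ) (i : Fin n) (b : Opp A i), S u = S (u + zGame c i b))
    (PIR : ∀ u : Game A, ∀ x ∈ S u, ∀ i : Fin n, u i x ≥ pir u i) :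
    ∀ u : Game A, ∀ x ∈ S u, IsPNE u x := by
  intro u x hx i bi
  obtain ⟨c, hc⟩ := Finite.bddAbove_range fun b : Opp A i =>
    u i (Function.update x i bi) - u i (merge i bi b)
  set w := u + ∑ b ∈ Finset.univ.erase (projOpp i x), zGame c i b
  have hw : ∀ a, w i a = u i a + if projOpp i a = projOpp i x then 0 else c := fun a => by
    simp only [w, Pi.add_apply, sum_zGame_apply_self, Finset.mem_erase, Finset.mem_univ, and_true,
      ite_not]
  have : Nonempty (Opp A i) := ⟨projOpp i x⟩
  have hxw : x ∈ S w := eq_add_sum_zGame_of_SE S SE u c i _ ▸ hx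
  have hdev : ∀ b, u i (Function.update x i bi) ≤ w i (merge i bi b) := by
    intro b
    rw [hw, projOpp_merge]
    split_ifs with hb
    · rw [hb, merge_projOpp, add_zero]
    · linarith [hc ⟨b, rfl⟩]
  calc u i (Function.update x i bi) ≤ pir w i := le_pir_of_forall_le bi hdev
    _ ≤ w i x := PIR w x hxw i
    _ = u i x := by rw [hw, if_pos rfl, add_zero]

/-- Any pure-strategies solution satisfying Strategic Equivalence (SE) and
Pure Individual Rationality (PIR) only outputs pure Nash equilibria. -/
theorem statement0 {n : ℕ} (hn : 0 < n) (A : Fin n → Type*)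
    [∀ i, Fintype (A i)] [∀ i, Nonempty (A i)]
    (S : Game A → Set (∀ j, A j))
    (SE : ∀ (u : Game A) (c : ℝ) (i : Fin n) (b : Opp A i), S u = S (u + zGame c i b))
    (PIR : ∀ u : Game A, ∀ x ∈ S u, ∀ i : Fin n, u i x ≥ pir u i) :
    ∀ u : Game A, ∀ x ∈ S u, IsPNE u x :=
  statement0_general A S SE PIR

end
end

section
/- Let S be a pure-strategies solution of finite games. If S satisfies Strategic Equivalence (SE) and the Simultaneous Maximizer axiom (SM), then for every game u, every pure Nash equilibrium of u belongs to S(u), i.e. PNE(u) ⊆ S(u). -/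
/-!
Adding `z(c, i, b₋ᵢ)` shifts player `i`'s payoffs along the slice `b₋ᵢ` by `c`. Shifting every
slice of every player so that its best-reply value becomes `uᵢ(a)` gives, by SE, a game with the
same solution set; when `a` is a pure Nash equilibrium, every payoff of player `i` in it is at most
`uᵢ(a)`, which player `i` receives at `a` itself. So `a` is a simultaneous maximizer, and SM applies.
-/

open scoped Classical

noncomputable section

namespace Game

variable {n : ℕ} {A : Fin n → Type*}

def oppProfile (a : ∀ j, A j) (i : Fin n) : Opp A i :=
  fun k => a k.1

lemma merge_oppProfile (i : Fin n) (ai : A i) (a : ∀ j, A j) :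
    merge i ai (oppProfile a i) = Function.update a i ai := by
  funext j
  by_cases h : j = i
  · subst h
    simp [merge]
  · simp [merge, oppProfile, h]

lemma merge_self_oppProfile (i : Fin n) (a : ∀ j, A j) : merge i (a i) (oppProfile a i) = a := by
  rw [merge_oppProfile, Function.update_eq_self]

lemma zGame_apply_ne {c : ℝ} {i j : Fin n} {b : Opp A i} {x : ∀ j, A j}
    (h : (⟨i, b⟩ : Σ i, Opp A i) ≠ ⟨j, oppProfile x j⟩) : zGame c i b j x = 0 := by
  refine if_neg ?_
  rintro ⟨rfl, hb⟩
  exact h (congrArg _ (funext hb).symm)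

lemma zGame_apply_self (c : ℝ) (i : Fin n) (x : ∀ j, A j) :
    zGame c i (oppProfile x i) i x = c :=
  if_pos ⟨rfl, fun _ => rfl⟩

lemma sum_zGame_apply [∀ i, Fintype (A i)] (c : (Σ i, Opp A i) → ℝ) (i : Fin n)
    (x : ∀ j, A j) :
    (∑ p, zGame (c p) p.1 p.2) i x = c ⟨i, oppProfile x i⟩ := by
  simp only [Finset.sum_apply]
  rw [Finset.sum_eq_single_of_mem _ (Finset.mem_univ _) fun p _ hp => zGame_apply_ne hp]
  exact zGame_apply_self _ _ _

lemma solution_add_sum_zGame (S : Game A → Set (∀ j, A j))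
    (SE : ∀ (u : Game A) (c : ℝ) (i : Fin n) (b : Opp A i), S u = S (u + zGame c i b))
    (u : Game A) (c : (Σ i, Opp A i) → ℝ) (s : Finset (Σ i, Opp A i)) :
    S (u + ∑ p ∈ s, zGame (c p) p.1 p.2) = S u := by
  induction s using Finset.induction_on with
  | empty => simp
  | insert p s hp ih =>
    rw [Finset.sum_insert hp, add_left_comm, add_comm, ← SE, ih]

def bestReplyValue (u : Game A) (i : Fin n) (b : Opp A i) : ℝ :=
  ⨆ ai : A i, u i (merge i ai b)

lemma le_bestReplyValue (u : Game A) (i : Fin n) [Finite (A i)] (x : ∀ j, A j) :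
    u i x ≤ bestReplyValue u i (oppProfile x i) := by
  conv_lhs => rw [← merge_self_oppProfile i x]
  exact le_ciSup (f := fun ai => u i (merge i ai (oppProfile x i))) (Set.finite_range _).bddAbove
    (x i)

lemma _root_.IsPNE.bestReplyValue_le {u : Game A} {a : ∀ j, A j} (ha : IsPNE u a) (i : Fin n) :
    bestReplyValue u i (oppProfile a i) ≤ u i a := by
  have : Nonempty (A i) := ⟨a i⟩
  refine ciSup_le fun ai => ?_
  rw [merge_oppProfile]
  exact ha i ai

end Game

open Game in
theorem statement4_general {n : ℕ} (A : Fin n → Type*)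
    [∀ i, Fintype (A i)]
    (S : Game A → Set (∀ j, A j))
    (SE : ∀ (u : Game A) (c : ℝ) (i : Fin n) (b : Opp A i), S u = S (u + zGame c i b))
    (SM : ∀ (u : Game A) (a : ∀ j, A j),
      (∀ (i : Fin n) (b : ∀ j, A j), u i a ≥ u i b) → a ∈ S u) :
    ∀ u : Game A, ∀ a : ∀ j, A j, IsPNE u a → a ∈ S u := by
  intro u a ha
  let c : (Σ i, Opp A i) → ℝ := fun p => u p.1 a - bestReplyValue u p.1 p.2
  let v : Game A := u + ∑ p, zGame (c p) p.1 p.2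
  have hv : ∀ i x, v i x = u i x - bestReplyValue u i (oppProfile x i) + u i a := fun i x => by
    simp only [v, Pi.add_apply, sum_zGame_apply, c]
    ring
  have hmax : ∀ i x, v i a ≥ v i x := fun i x => by
    rw [hv, hv]
    linarith [le_bestReplyValue u i x, ha.bestReplyValue_le i]
  rw [← solution_add_sum_zGame S SE u c]
  exact SM v a hmax

/-- Any pure-strategies solution satisfying Strategic Equivalence (SE) and the
Simultaneous Maximizer axiom (SM) contains every pure Nash equilibrium. -/
theorem statement4 {n : ℕ} (hn : 0 < n) (A : Fin n → Type*)
    [∀ i, Fintype (A i)] [∀ i, Nonempty (A i)]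
    (S : Game A → Set (∀ j, A j))
    (SE : ∀ (u : Game A) (c : ℝ) (i : Fin n) (b : Opp A i), S u = S (u + zGame c i b))
    (SM : ∀ (u : Game A) (a : ∀ j, A j),
      (∀ (i : Fin n) (b : ∀ j, A j), u i a ≥ u i b) → a ∈ S u) :
    ∀ u : Game A, ∀ a : ∀ j, A j, IsPNE u a → a ∈ S u :=
  statement4_general A S SE SM
end
end

section
/- Let S be a mixed-strategies solution of finite games. If S satisfies Strategic Equivalence (SE) and the Simultaneous Maximizer axiom (SM), then for every game u and every pure Nash equilibrium a of u, the degenerate mixed-strategy profile placing probability 1 on a_i for each player i belongs to S(u). -/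
open scoped Classical

noncomputable section

/-- A mixed-strategy profile: a probability distribution on `A i` for each player `i`. -/
abbrev MixedProfile {n : ℕ} (A : Fin n → Type*) [∀ i, Fintype (A i)] : Type _ :=
  {x : ∀ i, A i → ℝ // ∀ i, (∀ c, 0 ≤ x i c) ∧ ∑ c, x i c = 1}

/-- Multilinear extension of payoffs: the expected payoff of player `i` when each
player `j` independently plays the mixed strategy `x j`. -/
def Eu {n : ℕ} {A : Fin n → Type*} [∀ i, Fintype (A i)]
    (u : Game A) (i : Fin n) (x : ∀ j, A j → ℝ) : ℝ :=
  ∑ a : ∀ j, A j, (∏ j, x j (a j)) * u i a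

/-- The pure (Dirac) strategy on action `bi`. -/
def pureStrat {n : ℕ} {A : Fin n → Type*} {i : Fin n} (bi : A i) : A i → ℝ :=
  fun c => if c = bi then 1 else 0

/-- The degenerate mixed-strategy profile placing probability `1` on `a i` for each `i`. -/
def diracProfile {n : ℕ} {A : Fin n → Type*} [∀ i, Fintype (A i)] (a : ∀ j, A j) :
    MixedProfile A :=
  ⟨fun i c => if c = a i then 1 else 0,
   fun i => ⟨fun c => by by_cases h : c = a i <;> simp [h], by simp⟩⟩

/-!
Subtracting from player `i`'s payoff, at each opponents' profile `b`, the best payoff `i` can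
get against `b` is a finite sum of `z`-games, so by SE it does not change the solution. In the
normalized game every payoff is `≤ 0`, and at a pure Nash equilibrium `a` every player gets
exactly `0`; hence `a` is a simultaneous maximizer and SM puts its Dirac profile in the solution.
-/

open Finset

section

variable {n : ℕ} {A : Fin n → Type*}

def oppOf (i : Fin n) (x : ∀ j, A j) : Opp A i :=
  fun k => x k.1

lemma merge_oppOf (i : Fin n) (bi : A i) (a : ∀ j, A j) :
    merge i bi (oppOf i a) = Function.update a i bi := by
  funext j
  by_cases h : j = i
  · subst h; simp [merge]
  · simp [merge, oppOf, h]

lemma merge_self (i : Fin n) (x : ∀ j, A j) : merge i (x i) (oppOf i x) = x := by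
  rw [merge_oppOf, Function.update_eq_self]

lemma zGame_apply_of_ne {c : ℝ} {i j : Fin n} {b : Opp A i} {x : ∀ j, A j}
    (h : (⟨j, oppOf j x⟩ : Σ i, Opp A i) ≠ ⟨i, b⟩) : zGame c i b j x = 0 := by
  refine if_neg ?_
  rintro ⟨rfl, hb⟩
  exact h (congrArg _ (funext hb))

lemma sum_zGame_apply [∀ i, Fintype (A i)] (c : (Σ i, Opp A i) → ℝ) (i : Fin n)
    (x : ∀ j, A j) :
    (∑ p : Σ i, Opp A i, zGame (c p) p.1 p.2) i x = c ⟨i, oppOf i x⟩ := by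
  rw [Finset.sum_apply, Finset.sum_apply,
    Finset.sum_eq_single_of_mem (⟨i, oppOf i x⟩ : Σ i, Opp A i) (mem_univ _)]
  · simp [zGame, oppOf]
  · exact fun p _ hp => zGame_apply_of_ne (Ne.symm hp)

end

section

variable {n : ℕ} {A : Fin n → Type*} [∀ i, Fintype (A i)]

lemma solution_add_sum_zGame (S : Game A → Set (MixedProfile A))
    (SE : ∀ (u : Game A) (c : ℝ) (i : Fin n) (b : Opp A i), S u = S (u + zGame c i b))
    (F : Finset (Σ i, Opp A i)) (c : (Σ i, Opp A i) → ℝ) (u : Game A) :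
    S (u + ∑ p ∈ F, zGame (c p) p.1 p.2) = S u := by
  induction F using Finset.induction generalizing u with
  | empty => simp
  | insert p F hp ih =>
    rw [sum_insert hp, add_comm (zGame _ _ _), ← add_assoc, ← SE, ih]

variable [∀ i, Nonempty (A i)]

def bestPayoff (u : Game A) (i : Fin n) (b : Opp A i) : ℝ :=
  univ.sup' univ_nonempty fun ai => u i (merge i ai b)

def normalizedGame (u : Game A) : Game A :=
  u + ∑ p : Σ i, Opp A i, zGame (-bestPayoff u p.1 p.2) p.1 p.2

lemma normalizedGame_apply (u : Game A) (i : Fin n) (x : ∀ j, A j) :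
    normalizedGame u i x = u i x - bestPayoff u i (oppOf i x) := by
  simp only [normalizedGame, Pi.add_apply, sum_zGame_apply, sub_eq_add_neg]

lemma le_bestPayoff (u : Game A) (i : Fin n) (x : ∀ j, A j) :
    u i x ≤ bestPayoff u i (oppOf i x) :=
  calc u i x = u i (merge i (x i) (oppOf i x)) := by rw [merge_self]
    _ ≤ bestPayoff u i (oppOf i x) := le_sup' (fun ai => u i (merge i ai _)) (mem_univ _)

lemma normalizedGame_nonpos (u : Game A) (i : Fin n) (x : ∀ j, A j) :
    normalizedGame u i x ≤ 0 := by
  rw [normalizedGame_apply, sub_nonpos]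
  exact le_bestPayoff u i x

lemma IsPNE.normalizedGame_eq_zero {u : Game A} {a : ∀ j, A j} (ha : IsPNE u a) (i : Fin n) :
    normalizedGame u i a = 0 := by
  have hbest : bestPayoff u i (oppOf i a) ≤ u i a :=
    sup'_le _ _ fun ai _ => by simpa only [merge_oppOf] using ha i ai
  rw [normalizedGame_apply, sub_eq_zero]
  exact (le_bestPayoff u i a).antisymm hbest

lemma solution_normalizedGame (S : Game A → Set (MixedProfile A))
    (SE : ∀ (u : Game A) (c : ℝ) (i : Fin n) (b : Opp A i), S u = S (u + zGame c i b))
    (u : Game A) : S (normalizedGame u) = S u :=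
  solution_add_sum_zGame S SE univ _ u

end

theorem statement5_general {n : ℕ} (A : Fin n → Type*)
    [∀ i, Fintype (A i)] [∀ i, Nonempty (A i)]
    (S : Game A → Set (MixedProfile A))
    (SE : ∀ (u : Game A) (c : ℝ) (i : Fin n) (b : Opp A i), S u = S (u + zGame c i b))
    (SM : ∀ (u : Game A) (a : ∀ j, A j),
      (∀ (i : Fin n) (b : ∀ j, A j), u i a ≥ u i b) → diracProfile a ∈ S u) :
    ∀ u : Game A, ∀ a : ∀ j, A j, IsPNE u a → diracProfile a ∈ S u := by
  intro u a ha
  rw [← solution_normalizedGame S SE u]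
  refine SM _ a fun i x => ?_
  rw [ha.normalizedGame_eq_zero i]
  exact normalizedGame_nonpos u i x

/-- Any mixed-strategies solution satisfying Strategic Equivalence (SE) and the
Simultaneous Maximizer axiom (SM) contains the degenerate mixed profile on every
pure Nash equilibrium. -/
theorem statement5 {n : ℕ} (hn : 0 < n) (A : Fin n → Type*)
    [∀ i, Fintype (A i)] [∀ i, Nonempty (A i)]
    (S : Game A → Set (MixedProfile A))
    (SE : ∀ (u : Game A) (c : ℝ) (i : Fin n) (b : Opp A i), S u = S (u + zGame c i b))
    (SM : ∀ (u : Game A) (a : ∀ j, A j),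
      (∀ (i : Fin n) (b : ∀ j, A j), u i a ≥ u i b) → diracProfile a ∈ S u) :
    ∀ u : Game A, ∀ a : ∀ j, A j, IsPNE u a → diracProfile a ∈ S u :=
  statement5_general A S SE SM
end
end

section
/- Let S be a pure-strategies solution of finite games. If S satisfies Strategic Equivalence (SE), Pure Individual Rationality (PIR), and the Simultaneous Maximizer axiom (SM), then S coincides with pure Nash equilibrium: S(u) = PNE(u) for every game u. -/
open scoped Classical

noncomputable section

/-! SE is invariance under adding z-games, hence, summing them, under adding to every player's
payoff an arbitrary function of the opponents' actions. Subtracting each player's best-reply value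
turns a Nash equilibrium into a simultaneous maximizer, which SM puts into `S`. Conversely, if
player `i` gains by deviating from `x ∈ S u` to `bᵢ`, a large bonus to `i` whenever the
opponents leave `x₋ᵢ` keeps `x` in `S` but lets `bᵢ` guarantee `i` more than `x` pays, against
PIR. -/

section PureNash

variable {n : ℕ} {A : Fin n → Type*}

def opp (i : Fin n) (a : ∀ j, A j) : Opp A i := fun k => a k.1

@[simp]
lemma merge_opp (i : Fin n) (a : ∀ j, A j) (ai : A i) :
    merge i ai (opp i a) = Function.update a i ai := by
  funext j
  by_cases h : j = i
  · subst h; simp [merge]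
  · simp [merge, opp, h]

@[simp]
lemma opp_merge (i : Fin n) (ai : A i) (b : Opp A i) : opp i (merge i ai b) = b := by
  funext k; simp [opp, merge, k.2]

def oppGame (c : ∀ j, Opp A j → ℝ) : Game A := fun j a => c j (opp j a)

lemma sum_zGame_eq_oppGame [∀ i, Fintype (A i)] (c : ∀ j, Opp A j → ℝ) :
    ∑ p : Σ j, Opp A j, zGame (c p.1 p.2) p.1 p.2 = oppGame c := by
  funext j a
  rw [Finset.sum_apply, Finset.sum_apply, Finset.sum_eq_single ⟨j, opp j a⟩]
  · simp [zGame, oppGame, opp]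
  · rintro ⟨i, b⟩ - hne
    refine if_neg fun ⟨hji, hb⟩ => hne ?_
    subst hji
    exact congrArg _ (funext hb).symm
  · simp

def shiftInvariant (S : Game A → Set (∀ j, A j)) : AddSubmonoid (Game A) where
  carrier := {v | ∀ u, S (u + v) = S u}
  zero_mem' := by simp
  add_mem' {v w} hv hw u := by rw [← add_assoc, hw, hv]

lemma oppGame_mem_shiftInvariant [∀ i, Fintype (A i)] {S : Game A → Set (∀ j, A j)}
    (SE : ∀ (u : Game A) (c : ℝ) (i : Fin n) (b : Opp A i), S u = S (u + zGame c i b))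
    (c : ∀ j, Opp A j → ℝ) : oppGame c ∈ shiftInvariant S := by
  rw [← sum_zGame_eq_oppGame]
  exact AddSubmonoid.sum_mem _ fun p _ u => (SE u _ p.1 p.2).symm

lemma le_pir {i : Fin n} [Finite (A i)] [Nonempty (Opp A i)] {u : Game A} {t : ℝ} (ai : A i)
    (h : ∀ b, t ≤ u i (merge i ai b)) : t ≤ pir u i :=
  (le_ciInf h).trans <|
    le_ciSup (Set.finite_range fun ai => ⨅ b, u i (merge i ai b)).bddAbove ai

def bestReplyValue (u : Game A) (j : Fin n) (b : Opp A j) : ℝ :=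
  ⨆ aj : A j, u j (merge j aj b)

lemma le_bestReplyValue {j : Fin n} [Finite (A j)] (u : Game A) (a : ∀ j, A j) :
    u j a ≤ bestReplyValue u j (opp j a) := by
  simpa [bestReplyValue] using
    le_ciSup (Set.finite_range fun aj => u j (merge j aj (opp j a))).bddAbove (a j)

lemma bestReplyValue_eq_of_isPNE [∀ i, Finite (A i)] {u : Game A} {x : ∀ j, A j}
    (hx : IsPNE u x) (j : Fin n) : bestReplyValue u j (opp j x) = u j x := by
  unfold IsPNE at hx
  have : Nonempty (A j) := ⟨x j⟩
  refine le_antisymm (ciSup_le fun aj => ?_) (le_bestReplyValue u x)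
  simpa using hx j aj

variable [∀ i, Fintype (A i)] {S : Game A → Set (∀ j, A j)}

lemma mem_of_isPNE
    (SE : ∀ (u : Game A) (c : ℝ) (i : Fin n) (b : Opp A i), S u = S (u + zGame c i b))
    (SM : ∀ (u : Game A) (a : ∀ j, A j),
      (∀ (i : Fin n) (b : ∀ j, A j), u i a ≥ u i b) → a ∈ S u)
    {u : Game A} {x : ∀ j, A j} (hx : IsPNE u x) : x ∈ S u := by
  have hS : S (u - oppGame (bestReplyValue u)) = S u := by
    conv_rhs => rw [← sub_add_cancel u (oppGame (bestReplyValue u))]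
    exact (oppGame_mem_shiftInvariant SE _ _).symm
  rw [← hS]
  refine SM _ x fun j y => ?_
  simp only [Pi.sub_apply, oppGame, bestReplyValue_eq_of_isPNE hx, sub_self]
  linarith [le_bestReplyValue (j := j) u y]

lemma isPNE_of_mem
    (SE : ∀ (u : Game A) (c : ℝ) (i : Fin n) (b : Opp A i), S u = S (u + zGame c i b))
    (PIR : ∀ u : Game A, ∀ x ∈ S u, ∀ i : Fin n, u i x ≥ pir u i)
    {u : Game A} {x : ∀ j, A j} (hx : x ∈ S u) : IsPNE u x := by
  unfold IsPNE
  intro i bi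
  by_contra! hgain
  obtain ⟨m, hm⟩ := (Set.finite_range (u i)).bddBelow
  let c : ∀ j, Opp A j → ℝ :=
    Pi.single i fun b => if b = opp i x then 0 else u i (Function.update x i bi) - m
  have hx' : x ∈ S (u + oppGame c) := by rwa [oppGame_mem_shiftInvariant SE]
  have : Nonempty (Opp A i) := ⟨opp i x⟩
  have hpir : u i (Function.update x i bi) ≤ pir (u + oppGame c) i := by
    refine le_pir bi fun b => ?_
    simp only [Pi.add_apply, oppGame, opp_merge, c, Pi.single_eq_same]
    split_ifs with hb
    · simp [hb]
    · linarith [hm ⟨merge i bi b, rfl⟩]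
  have hval : (u + oppGame c) i x = u i x := by simp [oppGame, c]
  linarith [PIR _ x hx' i]

end PureNash

theorem statement7_general {n : ℕ} (A : Fin n → Type*)
    [∀ i, Fintype (A i)]
    (S : Game A → Set (∀ j, A j))
    (SE : ∀ (u : Game A) (c : ℝ) (i : Fin n) (b : Opp A i), S u = S (u + zGame c i b))
    (PIR : ∀ u : Game A, ∀ x ∈ S u, ∀ i : Fin n, u i x ≥ pir u i)
    (SM : ∀ (u : Game A) (a : ∀ j, A j),
      (∀ (i : Fin n) (b : ∀ j, A j), u i a ≥ u i b) → a ∈ S u) :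
    ∀ u : Game A, S u = {a | IsPNE u a} :=
  fun _ => Set.ext fun _ => ⟨isPNE_of_mem SE PIR, mem_of_isPNE SE SM⟩

/-- A pure-strategies solution satisfying Strategic Equivalence (SE), Pure Individual
Rationality (PIR) and the Simultaneous Maximizer axiom (SM) coincides with the pure
Nash equilibrium correspondence. -/
theorem statement7 {n : ℕ} (hn : 0 < n) (A : Fin n → Type*)
    [∀ i, Fintype (A i)] [∀ i, Nonempty (A i)]
    (S : Game A → Set (∀ j, A j))
    (SE : ∀ (u : Game A) (c : ℝ) (i : Fin n) (b : Opp A i), S u = S (u + zGame c i b))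
    (PIR : ∀ u : Game A, ∀ x ∈ S u, ∀ i : Fin n, u i x ≥ pir u i)
    (SM : ∀ (u : Game A) (a : ∀ j, A j),
      (∀ (i : Fin n) (b : ∀ j, A j), u i a ≥ u i b) → a ∈ S u) :
    ∀ u : Game A, S u = {a | IsPNE u a} :=
  statement7_general A S SE PIR SM
end
end

section
/- The pure Nash equilibrium correspondence, viewed as a pure-strategies solution S(u) = PNE(u) of finite games, satisfies Strategic Equivalence (SE), Pure Individual Rationality (PIR), and the Simultaneous Maximizer axiom (SM). (Hence, combined with the converse, PNE is the unique pure-strategies solution satisfying these three axioms.) -/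
open scoped Classical

noncomputable section

lemma isPNE_add_iff {n : ℕ} {A : Fin n → Type*} (u v : Game A) (a : ∀ j, A j)
    (hv : ∀ (j : Fin n) (x : ∀ k, A k) (bj : A j), v j (Function.update x j bj) = v j x) :
    IsPNE (u + v) a ↔ IsPNE u a :=
  forall₂_congr fun j bj => by simp only [Pi.add_apply, hv, add_le_add_iff_right]

lemma zGame_update {n : ℕ} {A : Fin n → Type*} (c : ℝ) (i : Fin n) (b : Opp A i)
    (j : Fin n) (x : ∀ k, A k) (bj : A j) :
    zGame c i b j (Function.update x j bj) = zGame c i b j x := by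
  by_cases hji : j = i
  · subst hji
    have hopp : ∀ k : {k : Fin n // k ≠ j}, Function.update x j bj k.1 = x k.1 :=
      fun k => Function.update_of_ne k.2 _ _
    simp only [zGame, hopp]
  · simp only [zGame, hji, false_and, if_false]

lemma merge_eq_update {n : ℕ} {A : Fin n → Type*} (i : Fin n) (ai : A i) (x : ∀ j, A j) :
    merge i ai (fun k => x k.1) = Function.update x i ai := by
  funext j
  by_cases h : j = i
  · subst h; simp [merge]
  · simp [merge, h]

/-- Against each own action `ai`, the opponents can answer with the opponents' part of `x`. -/
lemma pir_le_of_forall_update_le {n : ℕ} {A : Fin n → Type*} [∀ i, Fintype (A i)]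
    (u : Game A) (i : Fin n) (x : ∀ j, A j)
    (hx : ∀ ai : A i, u i (Function.update x i ai) ≤ u i x) : pir u i ≤ u i x := by
  have : Nonempty (A i) := ⟨x i⟩
  refine ciSup_le fun ai => ?_
  calc ⨅ b : Opp A i, u i (merge i ai b)
      ≤ u i (merge i ai (fun k => x k.1)) := ciInf_le (Set.finite_range _).bddBelow _
    _ = u i (Function.update x i ai) := by rw [merge_eq_update]
    _ ≤ u i x := hx ai

lemma isPNE_of_forall_le {n : ℕ} {A : Fin n → Type*} (u : Game A) (a : ∀ j, A j)
    (ha : ∀ (i : Fin n) (b : ∀ j, A j), u i b ≤ u i a) : IsPNE u a :=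
  fun i _ => ha i _

theorem statement8_general {n : ℕ} (A : Fin n → Type*)
    [∀ i, Fintype (A i)] :
    (∀ (u : Game A) (c : ℝ) (i : Fin n) (b : Opp A i),
        {a | IsPNE u a} = {a | IsPNE (u + zGame c i b) a}) ∧
    (∀ u : Game A, ∀ x ∈ {a | IsPNE u a}, ∀ i : Fin n, u i x ≥ pir u i) ∧
    (∀ (u : Game A) (a : ∀ j, A j),
        (∀ (i : Fin n) (b : ∀ j, A j), u i a ≥ u i b) → a ∈ {a' | IsPNE u a'}) :=
  ⟨fun u c i b => Set.ext fun a => (isPNE_add_iff u _ a (zGame_update c i b)).symm,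
    fun u x hx i => pir_le_of_forall_update_le u i x (hx i),
    isPNE_of_forall_le⟩

/-- The pure Nash equilibrium correspondence `u ↦ PNE(u)` satisfies Strategic
Equivalence (SE), Pure Individual Rationality (PIR), and the Simultaneous
Maximizer axiom (SM). -/
theorem statement8 {n : ℕ} (hn : 0 < n) (A : Fin n → Type*)
    [∀ i, Fintype (A i)] [∀ i, Nonempty (A i)] :
    (∀ (u : Game A) (c : ℝ) (i : Fin n) (b : Opp A i),
        {a | IsPNE u a} = {a | IsPNE (u + zGame c i b) a}) ∧
    (∀ u : Game A, ∀ x ∈ {a | IsPNE u a}, ∀ i : Fin n, u i x ≥ pir u i) ∧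
    (∀ (u : Game A) (a : ∀ j, A j),
        (∀ (i : Fin n) (b : ∀ j, A j), u i a ≥ u i b) → a ∈ {a' | IsPNE u a'}) :=
  statement8_general A
end
end

section
/- Suppose there are at least two players whose action sets each contain at least two actions. Then there is no mixed-strategies solution S of finite games that satisfies both Strategic Equivalence (SE) and the Unique Simultaneous Maximizer axiom (USM). -/
open scoped Classical

noncomputable section

/-!
Take two action profiles `a`, `a'` that differ for two players, so that for every player `k`
the opponents' profiles `a₋ₖ` and `a'₋ₖ` differ. In the game paying every player `2` at `a`,
`1` at `a'` and `0` elsewhere, `a` is the unique simultaneous maximizer. Adding `z(2, k, a'₋ₖ)`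
for every player `k` raises each payoff at `a'` to `3` but leaves the payoffs at `a` equal to
`2`, because `a₋ₖ ≠ a'₋ₖ`; so in the strategically equivalent game `a'` is the unique
simultaneous maximizer, and USM prescribes two different solutions for equivalent games.
-/

section

variable {n : ℕ} {A : Fin n → Type*}

def oppProfile (a : ∀ j, A j) (i : Fin n) : Opp A i := fun j => a j.1

def IsUniqueSimultaneousMaximizer (u : Game A) (a : ∀ j, A j) : Prop :=
  ∀ (i : Fin n) (b : ∀ j, A j), b ≠ a → u i b < u i a

def StrategicEquivalence [∀ i, Fintype (A i)] (S : Game A → Set (MixedProfile A)) : Prop :=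
  ∀ (u : Game A) (c : ℝ) (i : Fin n) (b : Opp A i), S u = S (u + zGame c i b)

def UniqueSimultaneousMaximizer [∀ i, Fintype (A i)] (S : Game A → Set (MixedProfile A)) :
    Prop :=
  ∀ (u : Game A) (a : ∀ j, A j), IsUniqueSimultaneousMaximizer u a → S u = {diracProfile a}

theorem oppProfile_ne_of_ne_of_ne {a a' : ∀ j, A j} {i j : Fin n} (hij : i ≠ j)
    (hi : a i ≠ a' i) (hj : a j ≠ a' j) (k : Fin n) : oppProfile a k ≠ oppProfile a' k := by
  intro h
  by_cases hki : k = i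
  · exact hj (congrFun h ⟨j, hki ▸ hij.symm⟩)
  · exact hi (congrFun h ⟨i, Ne.symm hki⟩)

theorem zGame_apply (c : ℝ) (i : Fin n) (b : Opp A i) (j : Fin n) (a : ∀ j, A j) :
    zGame c i b j a = if j = i ∧ oppProfile a i = b then c else 0 := by
  simp only [zGame, oppProfile, funext_iff]

theorem sum_zGame_oppProfile_apply (c : ℝ) (a' : ∀ j, A j) (j : Fin n) (b : ∀ j, A j) :
    (∑ i, zGame c i (oppProfile a' i)) j b =
      if oppProfile b j = oppProfile a' j then c else 0 := by
  simp [Finset.sum_apply, zGame_apply, ite_and]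

theorem diracProfile_injective [∀ i, Fintype (A i)] :
    Function.Injective (diracProfile : (∀ j, A j) → MixedProfile A) := by
  intro a a' h
  funext i
  have := congrFun (congrFun (congrArg Subtype.val h) i) (a i)
  simp only [diracProfile] at this
  by_contra hne
  simp [hne] at this

theorem StrategicEquivalence.eq_add_sum [∀ i, Fintype (A i)]
    {S : Game A → Set (MixedProfile A)} (hS : StrategicEquivalence S) (u : Game A)
    (c : Fin n → ℝ) (b : ∀ i, Opp A i) (s : Finset (Fin n)) :
    S u = S (u + ∑ i ∈ s, zGame (c i) i (b i)) := by
  induction s using Finset.induction with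
  | empty => simp
  | insert i s hi ih =>
    rw [Finset.sum_insert hi, add_left_comm, add_comm (zGame _ _ _), ← hS, ih]

def twoPeakGame (a a' : ∀ j, A j) : Game A :=
  fun _ b => if b = a then 2 else if b = a' then 1 else 0

theorem isUniqueSimultaneousMaximizer_twoPeakGame
    (a a' : ∀ j, A j) : IsUniqueSimultaneousMaximizer (twoPeakGame a a') a := by
  intro i b hb
  simp only [twoPeakGame, if_neg hb]
  split_ifs <;> norm_num

theorem isUniqueSimultaneousMaximizer_twoPeakGame_add_sum_zGame
    {a a' : ∀ j, A j} (hopp : ∀ k, oppProfile a k ≠ oppProfile a' k) :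
    IsUniqueSimultaneousMaximizer
      (twoPeakGame a a' + ∑ k, zGame 2 k (oppProfile a' k)) a' := by
  intro k b hb
  have hpeak : 3 ≤ (twoPeakGame a a' + ∑ k, zGame 2 k (oppProfile a' k)) k a' := by
    simp only [Pi.add_apply, sum_zGame_oppProfile_apply, twoPeakGame]
    split_ifs <;> norm_num
  suffices (twoPeakGame a a' + ∑ k, zGame 2 k (oppProfile a' k)) k b ≤ 2 by linarith
  simp only [Pi.add_apply, sum_zGame_oppProfile_apply, twoPeakGame, if_neg hb]
  by_cases hba : b = a
  · subst hba
    simp [hopp k]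
  · simp only [if_neg hba]
    split_ifs <;> norm_num

theorem not_strategicEquivalence_and_uniqueSimultaneousMaximizer [∀ i, Fintype (A i)]
    {a a' : ∀ j, A j} {i j : Fin n} (hij : i ≠ j) (hi : a i ≠ a' i) (hj : a j ≠ a' j)
    (S : Game A → Set (MixedProfile A)) :
    ¬ (StrategicEquivalence S ∧ UniqueSimultaneousMaximizer S) := by
  rintro ⟨hSE, hUSM⟩
  have hopp := oppProfile_ne_of_ne_of_ne hij hi hj
  have hv := hUSM _ _ (isUniqueSimultaneousMaximizer_twoPeakGame a a')
  have hw := hUSM _ _ (isUniqueSimultaneousMaximizer_twoPeakGame_add_sum_zGame hopp)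
  rw [← hSE.eq_add_sum, hv, Set.singleton_eq_singleton_iff] at hw
  exact hi (congrFun (diracProfile_injective hw) i)

theorem exists_ne_ne_of_one_lt_card [∀ i, Nonempty (A i)] {i j : Fin n} [Fintype (A i)]
    [Fintype (A j)] (hij : i ≠ j) (hi : 1 < Fintype.card (A i)) (hj : 1 < Fintype.card (A j)) :
    ∃ a a' : ∀ k, A k, a i ≠ a' i ∧ a j ≠ a' j := by
  let a : ∀ k, A k := fun k => Classical.arbitrary (A k)
  obtain ⟨x, hx⟩ := Fintype.exists_ne_of_one_lt_card hi (a i)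
  obtain ⟨y, hy⟩ := Fintype.exists_ne_of_one_lt_card hj (a j)
  refine ⟨a, Function.update (Function.update a i x) j y, ?_, ?_⟩
  · simpa [Function.update_of_ne hij] using hx.symm
  · simpa using hy.symm

end

/-- If at least two players have at least two actions each, then no mixed-strategies
solution satisfies both Strategic Equivalence (SE) and the Unique Simultaneous
Maximizer axiom (USM). -/
theorem statement13 {n : ℕ} (A : Fin n → Type*)
    [∀ i, Fintype (A i)] [∀ i, Nonempty (A i)]
    (i j : Fin n) (hij : i ≠ j)
    (hi : 1 < Fintype.card (A i)) (hj : 1 < Fintype.card (A j)) :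
    ¬ ∃ S : Game A → Set (MixedProfile A),
      (∀ (u : Game A) (c : ℝ) (k : Fin n) (b : Opp A k), S u = S (u + zGame c k b)) ∧
      (∀ (u : Game A) (a : ∀ k, A k),
        (∀ (k : Fin n) (b : ∀ l, A l), b ≠ a → u k a > u k b) →
          S u = {diracProfile a}) := by
  rintro ⟨S, hS⟩
  obtain ⟨a, a', hai, haj⟩ := exists_ne_ne_of_one_lt_card hij hi hj
  exact not_strategicEquivalence_and_uniqueSimultaneousMaximizer hij hai haj S hS
end
end

section
/- Let S be a pure-strategies solution of continuous convex games on compact convex action sets. If S satisfies Continuous Strategic Equivalence (CSE) and Pure Individual Rationality (PIR), then for every continuous convex game u, every element of S(u) is a pure Nash equilibrium of u, i.e. S(u) ⊆ PNE(u). -/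
open scoped Classical

noncomputable section

variable {n : ℕ} {E : Fin n → Type*}
  [∀ i, NormedAddCommGroup (E i)] [∀ i, NormedSpace ℝ (E i)]

/-- Action profiles: one action from each player's action set `A i`. -/
abbrev CProfile (A : ∀ i, Set (E i)) : Type _ := ∀ j, ↥(A j)

/-- A game with action sets `A i`: a payoff function for each player. -/
abbrev CGame (A : ∀ i, Set (E i)) : Type _ := Fin n → CProfile A → ℝ

/-- Opponents' action profiles of player `i`. -/
abbrev COpp (A : ∀ i, Set (E i)) (i : Fin n) : Type _ :=
  ∀ j : {j : Fin n // j ≠ i}, ↥(A j.1)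

/-- The game `z(i, f)`: player `i` receives payoff `f(a₋ᵢ)` at every profile `a`
(irrespective of his own action); every other player always gets `0`. -/
def zC (A : ∀ i, Set (E i)) (i : Fin n) (f : COpp A i → ℝ) : CGame A :=
  fun j a => if j = i then f (fun k => a k.1) else 0

/-- The full profile obtained from own action `ai` of player `i` and an opponents'
profile `b`. -/
def mergeC (A : ∀ i, Set (E i)) (i : Fin n) (ai : ↥(A i)) (b : COpp A i) :
    CProfile A :=
  fun j => if h : j = i then cast (congrArg (fun t => ↥(A t)) h.symm) ai else b ⟨j, h⟩

/-- The pure individually rational value of player `i`: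
`pir_i(u) = max_{a_i} min_{a_{-i}} u_i(a_i, a_{-i})`. -/
def pirC (A : ∀ i, Set (E i)) (u : CGame A) (i : Fin n) : ℝ :=
  ⨆ ai : ↥(A i), ⨅ b : COpp A i, u i (mergeC A i ai b)

/-- A continuous convex game: each payoff function is continuous, and each player's
payoff is a convex function of his own action (for every fixed opponents' profile). -/
def IsCCGame (A : ∀ i, Set (E i)) (hconv : ∀ i, Convex ℝ (A i)) (u : CGame A) : Prop :=
  (∀ i, Continuous (u i)) ∧
  ∀ (i : Fin n) (a : CProfile A) (x y : ↥(A i)) (s t : ℝ)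
    (hs : 0 ≤ s) (ht : 0 ≤ t) (hst : s + t = 1),
    u i (Function.update a i ⟨s • (x : E i) + t • (y : E i),
        hconv i x.2 y.2 hs ht hst⟩) ≤
      s * u i (Function.update a i x) + t * u i (Function.update a i y)

/-- `a` is a pure Nash equilibrium of `u`. -/
def IsPNEc (A : ∀ i, Set (E i)) (u : CGame A) (a : CProfile A) : Prop :=
  ∀ (i : Fin n) (bi : ↥(A i)), u i (Function.update a i bi) ≤ u i a

/-- `a` is a strict pure Nash equilibrium of `u`. -/
def IsStrictPNEc (A : ∀ i, Set (E i)) (u : CGame A) (a : CProfile A) : Prop :=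
  ∀ (i : Fin n) (bi : ↥(A i)), bi ≠ a i → u i (Function.update a i bi) < u i a

/-!
Fix a profile `x ∈ S(u)`, a player `i` and a deviation `bᵢ`. Adding `z(i, f)` with
`f(a₋ᵢ) = -uᵢ(bᵢ, a₋ᵢ)` gives a game `u'` with `u'ᵢ(a) = uᵢ(a) - uᵢ(bᵢ, a₋ᵢ)`. In `u'` the
action `bᵢ` guarantees player `i` the payoff `0`, so `pirᵢ(u') ≥ 0`. By CSE `x ∈ S(u')`, and by
PIR `uᵢ(x) - uᵢ(bᵢ, x₋ᵢ) = u'ᵢ(x) ≥ 0`.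
-/

section Lemmas

variable {n : ℕ} {E : Fin n → Type*} (A : ∀ i, Set (E i))

@[simp]
lemma mergeC_self (i : Fin n) (ai : ↥(A i)) (b : COpp A i) : mergeC A i ai b i = ai := by
  simp [mergeC]

@[simp]
lemma mergeC_of_ne (i : Fin n) (ai : ↥(A i)) (b : COpp A i) {j : Fin n} (h : j ≠ i) :
    mergeC A i ai b j = b ⟨j, h⟩ := by
  simp [mergeC, h]

lemma restrict_mergeC (i : Fin n) (ai : ↥(A i)) (b : COpp A i) :
    (fun k : {j : Fin n // j ≠ i} => mergeC A i ai b k.1) = b :=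
  funext fun k => mergeC_of_ne A i ai b k.2

lemma mergeC_restrict (i : Fin n) (ai : ↥(A i)) (x : CProfile A) :
    mergeC A i ai (fun k => x k.1) = Function.update x i ai := by
  funext j
  by_cases h : j = i
  · subst h
    simp
  · simp [h]

lemma add_zC_apply_self (u : CGame A) (i : Fin n) (f : COpp A i → ℝ) (a : CProfile A) :
    (u + zC A i f) i a = u i a + f (fun k => a k.1) := by
  simp [zC]

lemma zC_update_self (i : Fin n) (f : COpp A i → ℝ) (j : Fin n) (a : CProfile A)
    (v : ↥(A j)) : zC A i f j (Function.update a j v) = zC A i f j a := by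
  by_cases h : j = i
  · subst h
    have hrestrict : (fun k : {k : Fin n // k ≠ j} => Function.update a j v k.1)
        = fun k : {k : Fin n // k ≠ j} => a k.1 :=
      funext fun k => Function.update_of_ne k.2 _ a
    simp [zC, hrestrict]
  · simp [zC, h]

section Topology

variable [∀ i, TopologicalSpace (E i)]

lemma continuous_mergeC (i : Fin n) (ai : ↥(A i)) :
    Continuous (mergeC A i ai) := by
  refine continuous_pi fun j => ?_
  by_cases h : j = i
  · subst h
    simpa only [mergeC_self] using continuous_const
  · simpa only [mergeC_of_ne A i ai _ h] using continuous_apply _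

lemma continuous_zC (i : Fin n) {f : COpp A i → ℝ} (hf : Continuous f) (j : Fin n) :
    Continuous (zC A i f j) := by
  unfold zC
  split_ifs with h
  · subst h
    exact hf.comp (continuous_pi fun k => continuous_apply k.1)
  · exact continuous_const

lemma le_pirC (hA : ∀ i, IsCompact (A i)) (hne : ∀ i, (A i).Nonempty) {u : CGame A}
    {i : Fin n} (hui : Continuous (u i)) {ai : ↥(A i)} {c : ℝ}
    (hc : ∀ b : COpp A i, c ≤ u i (mergeC A i ai b)) : c ≤ pirC A u i := by
  have : ∀ j, Nonempty ↥(A j) := fun j => (hne j).to_subtype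
  have : ∀ j, CompactSpace ↥(A j) := fun j => isCompact_iff_compactSpace.mp (hA j)
  obtain ⟨C, hC⟩ := (isCompact_range hui).bddAbove
  obtain ⟨D, hD⟩ := (isCompact_range hui).bddBelow
  have hbdd : BddAbove (Set.range fun ai : ↥(A i) => ⨅ b : COpp A i, u i (mergeC A i ai b)) := by
    refine ⟨C, ?_⟩
    rintro _ ⟨a, rfl⟩
    exact ciInf_le_of_le ⟨D, by rintro _ ⟨b, rfl⟩; exact hD ⟨_, rfl⟩⟩ (Classical.arbitrary _)
      (hC ⟨_, rfl⟩)
  exact (le_ciInf hc).trans (le_ciSup hbdd ai)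

end Topology

lemma IsCCGame.add_zC [∀ i, NormedAddCommGroup (E i)] [∀ i, NormedSpace ℝ (E i)]
    {hconv : ∀ i, Convex ℝ (A i)} {u : CGame A} (hu : IsCCGame A hconv u)
    (i : Fin n) {f : COpp A i → ℝ} (hf : Continuous f) :
    IsCCGame A hconv (u + zC A i f) := by
  refine ⟨fun j => (hu.1 j).add (continuous_zC A i hf j), ?_⟩
  intro j a x y s t hs ht hst
  have hconvex := hu.2 j a x y s t hs ht hst
  simp only [Pi.add_apply, zC_update_self]
  linear_combination hconvex - zC A i f j a * hst

end Lemmas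

theorem statement14_general {n : ℕ} {E : Fin n → Type*}
    [∀ i, NormedAddCommGroup (E i)] [∀ i, NormedSpace ℝ (E i)]
    (A : ∀ i, Set (E i)) (hA : ∀ i, IsCompact (A i)) (hconv : ∀ i, Convex ℝ (A i))
    (hne : ∀ i, (A i).Nonempty)
    (S : CGame A → Set (CProfile A))
    (CSE : ∀ u : CGame A, IsCCGame A hconv u →
      ∀ (i : Fin n) (f : COpp A i → ℝ), Continuous f → S u = S (u + zC A i f))
    (PIR : ∀ u : CGame A, IsCCGame A hconv u →
      ∀ x ∈ S u, ∀ i : Fin n, u i x ≥ pirC A u i) :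
    ∀ u : CGame A, IsCCGame A hconv u → ∀ x ∈ S u, IsPNEc A u x := by
  intro u hu x hx i bi
  set f : COpp A i → ℝ := fun b => -u i (mergeC A i bi b)
  have hf : Continuous f := ((hu.1 i).comp (continuous_mergeC A i bi)).neg
  have hu' := hu.add_zC A i hf
  have hx' : x ∈ S (u + zC A i f) := CSE u hu i f hf ▸ hx
  have hpir : 0 ≤ pirC A (u + zC A i f) i :=
    le_pirC A hA hne (hu'.1 i) (ai := bi) fun b => by simp [add_zC_apply_self, f, restrict_mergeC]
  have hgain : 0 ≤ u i x - u i (Function.update x i bi) := by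
    simpa [add_zC_apply_self, f, mergeC_restrict, ← sub_eq_add_neg] using
      hpir.trans (PIR _ hu' x hx' i)
  exact sub_nonneg.mp hgain

/-- Any pure-strategies solution of continuous convex games satisfying Continuous
Strategic Equivalence (CSE) and Pure Individual Rationality (PIR) only outputs
pure Nash equilibria. -/
theorem statement14 {n : ℕ} (hn : 0 < n) {E : Fin n → Type*}
    [∀ i, NormedAddCommGroup (E i)] [∀ i, NormedSpace ℝ (E i)]
    (A : ∀ i, Set (E i)) (hA : ∀ i, IsCompact (A i)) (hconv : ∀ i, Convex ℝ (A i))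
    (hne : ∀ i, (A i).Nonempty)
    (S : CGame A → Set (CProfile A))
    (CSE : ∀ u : CGame A, IsCCGame A hconv u →
      ∀ (i : Fin n) (f : COpp A i → ℝ), Continuous f → S u = S (u + zC A i f))
    (PIR : ∀ u : CGame A, IsCCGame A hconv u →
      ∀ x ∈ S u, ∀ i : Fin n, u i x ≥ pirC A u i) :
    ∀ u : CGame A, IsCCGame A hconv u → ∀ x ∈ S u, IsPNEc A u x :=
  statement14_general A hA hconv hne S CSE PIR
end
end
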